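/- For f ∈ C[0,∞) uniformly continuous, a ≥ 0, x ≥ 0, n ≥ 1, and 0 ≤ α ≤ β, |L_{n,a}^{α,β}(f;x) − f(x)| ≤ (1 + √(γ_n^{α,β}(x)))·ω(f; (n+β)^{-1/2}), where γ_n^{α,β}(x) = ((n+β²)/(n+β))x² + ((n−2αβ)/(n+β))x + (a²/(n+β))·x²/(1+x)² − (2aβ/(n+β))·x²/(1+x) + (a(1+2α)/(n+β))·x/(1+x) + α²/(n+β). -/

import Mathlib

noncomputable def rising (n i : ℕ) : ℝ := ∏ j ∈ Finset.range i, ((n : ℝ) + j)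

noncomputable def pk (n : ℕ) (a : ℝ) (k : ℕ) : ℝ :=
  ∑ i ∈ Finset.range (k + 1), (k.choose i : ℝ) * rising n i * a ^ (k - i)

noncomputable def W (n : ℕ) (a x : ℝ) (k : ℕ) : ℝ :=
  Real.exp (-(a * x) / (1 + x)) * (pk n a k / (k.factorial : ℝ)) * x ^ k / (1 + x) ^ (k + n)

noncomputable def L (n : ℕ) (a α β : ℝ) (f : ℝ → ℝ) (x : ℝ) : ℝ :=
  ∑' k : ℕ, W n a x k * f (((k : ℝ) + α) / ((n : ℝ) + β))


noncomputable def omega (f : ℝ → ℝ) (δ : ℝ) : ℝ :=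
  sSup {d : ℝ | ∃ t s : ℝ, 0 ≤ t ∧ 0 ≤ s ∧ |t - s| ≤ δ ∧ d = |f t - f s|}


/-!
With `u = x / (1 + x)` the weights factor as
`W n a x k = (1 + x)⁻ⁿ ∑ᵢ nbWeight n u i * poissonWeight (a u) (k - i)`, so `W n a x` is the
convolution of a negative binomial law (mean `n x`, variance `n x (1 + x)`) and a Poisson law of
parameter `a u`. Means and variances add, which gives the second central moment `γ / (n + β)` at
the nodes `(k + α) / (n + β)`. The estimate then follows from
`|f t - f x| ≤ (1 + |t - x| / δ) ω(f, δ)` and the Cauchy–Schwarz bound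
`∑ W_k |t_k - x| ≤ (∑ W_k (t_k - x)²)^{1/2}`, with `δ = (n + β)^{-1/2}`.
-/

open Finset

section ModulusOfContinuity

variable {f : ℝ → ℝ} {δ : ℝ}

lemma abs_sub_le_nat_mul_of_forall_abs_sub_le {S : Set ℝ} (hS : S.OrdConnected) {η K : ℝ}
    (hη : 0 ≤ η) (hK : ∀ t ∈ S, ∀ s ∈ S, |t - s| ≤ η → |f t - f s| ≤ K) (m : ℕ) :
    ∀ t ∈ S, ∀ s ∈ S, |t - s| ≤ m * η → |f t - f s| ≤ m * K := by
  suffices h : ∀ t ∈ S, ∀ s ∈ S, s ≤ t → t - s ≤ m * η → |f t - f s| ≤ m * K by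
    intro t ht s hs hts
    rcases le_total s t with hst | hts'
    · exact h t ht s hs hst ((le_abs_self _).trans hts)
    · rw [abs_sub_comm] at hts ⊢
      exact h s hs t ht hts' ((le_abs_self _).trans hts)
  induction m with
  | zero =>
    intro t _ s _ hst hts
    rw [le_antisymm (by simpa using hts) hst]
    simp
  | succ m ih =>
    intro t ht s hs hst hts
    push_cast at hts
    set t' := max s (t - η)
    have hst' : s ≤ t' := le_max_left _ _
    have ht't : t' ≤ t := max_le hst (by linarith)
    have ht' : t' ∈ S := hS.out hs ht ⟨hst', ht't⟩
    have h₁ : |f t - f t'| ≤ K := hK t ht t' ht' <| by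
      rw [abs_of_nonneg (sub_nonneg.2 ht't)]
      linarith [le_max_right s (t - η)]
    have h₂ : |f t' - f s| ≤ m * K := ih t' ht' s hs hst' <| by
      rw [sub_le_iff_le_add']
      exact max_le (le_add_of_nonneg_right (mul_nonneg m.cast_nonneg hη)) (by linarith)
    calc |f t - f s| ≤ |f t - f t'| + |f t' - f s| := abs_sub_le _ _ _
      _ ≤ K + m * K := add_le_add h₁ h₂
      _ = (m + 1 : ℕ) * K := by push_cast; ring

lemma bddAbove_omega_set (hf : UniformContinuousOn f (Set.Ici 0)) :
    BddAbove {d : ℝ | ∃ t s : ℝ, 0 ≤ t ∧ 0 ≤ s ∧ |t - s| ≤ δ ∧ d = |f t - f s|} := by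
  obtain ⟨η, hη, hη₁⟩ := Metric.uniformContinuousOn_iff_le.mp hf 1 one_pos
  refine ⟨⌈δ / η⌉₊ * 1, ?_⟩
  rintro _ ⟨t, s, ht, hs, hts, rfl⟩
  refine abs_sub_le_nat_mul_of_forall_abs_sub_le Set.ordConnected_Ici hη.le
    (fun t ht s hs h => hη₁ t ht s hs h) _ t ht s hs (hts.trans ?_)
  rw [← div_le_iff₀ hη]
  exact Nat.le_ceil _

lemma abs_sub_le_omega (hf : UniformContinuousOn f (Set.Ici 0)) {t s : ℝ}
    (ht : 0 ≤ t) (hs : 0 ≤ s) (hts : |t - s| ≤ δ) : |f t - f s| ≤ omega f δ :=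
  le_csSup (bddAbove_omega_set hf) ⟨t, s, ht, hs, hts, rfl⟩

lemma omega_nonneg (hf : UniformContinuousOn f (Set.Ici 0)) (hδ : 0 ≤ δ) : 0 ≤ omega f δ :=
  (abs_nonneg _).trans (abs_sub_le_omega hf le_rfl le_rfl (by simpa using hδ))

lemma abs_sub_le_one_add_div_mul_omega (hf : UniformContinuousOn f (Set.Ici 0)) (hδ : 0 < δ)
    {t s : ℝ} (ht : 0 ≤ t) (hs : 0 ≤ s) : |f t - f s| ≤ (1 + |t - s| / δ) * omega f δ := by
  have hm : |t - s| ≤ ⌈|t - s| / δ⌉₊ * δ := by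
    rw [← div_le_iff₀ hδ]
    exact Nat.le_ceil _
  calc |f t - f s| ≤ ⌈|t - s| / δ⌉₊ * omega f δ :=
        abs_sub_le_nat_mul_of_forall_abs_sub_le Set.ordConnected_Ici hδ.le
          (fun t ht s hs h => abs_sub_le_omega hf ht hs h) _ t ht s hs hm
    _ ≤ (1 + |t - s| / δ) * omega f δ := by
        gcongr
        · exact omega_nonneg hf hδ.le
        · linarith [Nat.ceil_lt_add_one (by positivity : 0 ≤ |t - s| / δ)]

end ModulusOfContinuity

section PositiveWeights

variable {w g : ℕ → ℝ} {V : ℝ}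

lemma summable_mul_abs_of_hasSum_mul_sq (hw : ∀ k, 0 ≤ w k) (hw₁ : Summable w)
    (hV : HasSum (fun k => w k * g k ^ 2) V) : Summable fun k => w k * |g k| := by
  refine Summable.of_nonneg_of_le (fun k => mul_nonneg (hw k) (abs_nonneg _)) (fun k => ?_)
    ((hw₁.add hV.summable).div_const 2)
  rw [← sq_abs (g k)]
  nlinarith [mul_nonneg (hw k) (sq_nonneg (|g k| - 1))]

lemma tsum_mul_abs_le_sqrt (hw : ∀ k, 0 ≤ w k) (hw₁ : HasSum w 1)
    (hV : HasSum (fun k => w k * g k ^ 2) V) : ∑' k, w k * |g k| ≤ √V := by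
  set S := ∑' k, w k * |g k|
  have hS := (summable_mul_abs_of_hasSum_mul_sq hw hw₁.summable hV).hasSum
  -- `S ^ 2 ≤ V` because the variance of `|g|` is nonnegative
  have hvar : HasSum (fun k => w k * (|g k| - S) ^ 2) (V - 2 * S * S + S ^ 2 * 1) :=
    ((hV.sub (hS.mul_left (2 * S))).add (hw₁.mul_left (S ^ 2))).congr_fun fun k => by
      rw [← sq_abs (g k)]
      ring
  have := hvar.nonneg fun k => mul_nonneg (hw k) (sq_nonneg _)
  exact (le_abs_self S).trans (Real.abs_le_sqrt (by linarith))

theorem abs_tsum_mul_sub_le_omega {s : ℕ → ℝ} {f : ℝ → ℝ} {x δ : ℝ}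
    (hf : UniformContinuousOn f (Set.Ici 0)) (hδ : 0 < δ) (hx : 0 ≤ x) (hs : ∀ k, 0 ≤ s k)
    (hw : ∀ k, 0 ≤ w k) (hw₁ : HasSum w 1) (hV : HasSum (fun k => w k * (s k - x) ^ 2) V) :
    |∑' k, w k * f (s k) - f x| ≤ (1 + δ⁻¹ * √V) * omega f δ := by
  set ω := omega f δ
  have hbound : ∀ k, ‖w k * (f (s k) - f x)‖ ≤ ω * w k + ω / δ * (w k * |s k - x|) := by
    intro k
    rw [Real.norm_eq_abs, abs_mul, abs_of_nonneg (hw k)]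
    calc w k * |f (s k) - f x| ≤ w k * ((1 + |s k - x| / δ) * ω) :=
          mul_le_mul_of_nonneg_left (abs_sub_le_one_add_div_mul_omega hf hδ (hs k) hx) (hw k)
      _ = ω * w k + ω / δ * (w k * |s k - x|) := by ring
  have hmaj := (hw₁.mul_left ω).add
    ((summable_mul_abs_of_hasSum_mul_sq hw hw₁.summable hV).hasSum.mul_left (ω / δ))
  have hdiff : Summable fun k => w k * (f (s k) - f x) := .of_norm_bounded hmaj.summable hbound
  have hL : HasSum (fun k => w k * f (s k)) (∑' k, w k * (f (s k) - f x) + f x * 1) :=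
    (hdiff.hasSum.add (hw₁.mul_left (f x))).congr_fun fun k => by ring
  rw [hL.tsum_eq, mul_one, add_sub_cancel_right, ← Real.norm_eq_abs]
  calc ‖∑' k, w k * (f (s k) - f x)‖ ≤ ω * 1 + ω / δ * ∑' k, w k * |s k - x| :=
        tsum_of_norm_bounded hmaj hbound
    _ ≤ ω * 1 + ω / δ * √V := by
        gcongr
        · exact div_nonneg (omega_nonneg hf hδ.le) hδ.le
        · exact tsum_mul_abs_le_sqrt hw hw₁ hV
    _ = (1 + δ⁻¹ * √V) * ω := by ring

end PositiveWeights

lemma hasSum_nat_mul_of_succ {p q : ℕ → ℝ} {r Q : ℝ} (hq : HasSum q Q)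
    (h : ∀ i : ℕ, ((i : ℝ) + 1) * p (i + 1) = r * q i) :
    HasSum (fun i : ℕ => (i : ℝ) * p i) (r * Q) := by
  refine (hasSum_nat_add_iff' 1).mp ?_
  simpa [h] using hq.mul_left r

lemma hasSum_nat_sq_mul_of_succ {p q : ℕ → ℝ} {r Q Q₁ : ℝ} (hq : HasSum q Q)
    (hq₁ : HasSum (fun i : ℕ => (i : ℝ) * q i) Q₁)
    (h : ∀ i : ℕ, ((i : ℝ) + 1) * p (i + 1) = r * q i) :
    HasSum (fun i : ℕ => (i : ℝ) ^ 2 * p i) (r * (Q₁ + Q)) := by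
  simp_rw [sq, mul_assoc]
  refine hasSum_nat_mul_of_succ (hq₁.add hq) fun i => ?_
  push_cast
  rw [h i]
  ring

lemma hasSum_sum_range_mul {p q : ℕ → ℝ} {P Q : ℝ} (hp : HasSum p P) (hq : HasSum q Q) :
    HasSum (fun k => ∑ i ∈ range (k + 1), p i * q (k - i)) (P * Q) := by
  have h := hasSum_sum_range_mul_of_summable_norm hp.summable.norm hq.summable.norm
  rwa [hp.tsum_eq, hq.tsum_eq] at h

lemma hasSum_sum_range_mul_mul_add_sq {p q : ℕ → ℝ} {P P₁ P₂ Q Q₁ Q₂ : ℝ}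
    (hp : HasSum p P) (hp₁ : HasSum (fun i : ℕ => (i : ℝ) * p i) P₁)
    (hp₂ : HasSum (fun i : ℕ => (i : ℝ) ^ 2 * p i) P₂)
    (hq : HasSum q Q) (hq₁ : HasSum (fun j : ℕ => (j : ℝ) * q j) Q₁)
    (hq₂ : HasSum (fun j : ℕ => (j : ℝ) ^ 2 * q j) Q₂) (c : ℝ) :
    HasSum (fun k : ℕ => (∑ i ∈ range (k + 1), p i * q (k - i)) * ((k : ℝ) + c) ^ 2)
      (P₂ * Q + 2 * (P₁ * (Q₁ + c * Q)) + P * (Q₂ + 2 * c * Q₁ + c ^ 2 * Q)) := by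
  have hq' : HasSum (fun j : ℕ => ((j : ℝ) + c) * q j) (Q₁ + c * Q) :=
    (hq₁.add (hq.mul_left c)).congr_fun fun j => by ring
  have hq'' : HasSum (fun j : ℕ => ((j : ℝ) + c) ^ 2 * q j) (Q₂ + 2 * c * Q₁ + c ^ 2 * Q) :=
    ((hq₂.add (hq₁.mul_left (2 * c))).add (hq.mul_left (c ^ 2))).congr_fun fun j => by ring
  refine (((hasSum_sum_range_mul hp₂ hq).add ((hasSum_sum_range_mul hp₁ hq').mul_left 2)).add
    (hasSum_sum_range_mul hp hq'')).congr_fun fun k => ?_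
  simp only [sum_mul, mul_sum, ← sum_add_distrib]
  refine sum_congr rfl fun i hi => ?_
  -- `k = i + (k - i)` splits the square
  rw [Nat.cast_sub (mem_range_succ_iff.mp hi)]
  ring

lemma rising_succ_eq_mul_rising (m i : ℕ) : rising m (i + 1) = m * rising (m + 1) i := by
  rw [rising, prod_range_succ', rising, mul_comm]
  push_cast
  simp only [add_assoc, add_comm (1 : ℝ), add_zero]

lemma rising_eq_ascFactorial (m i : ℕ) : rising m i = m.ascFactorial i := by
  rw [rising, Nat.ascFactorial_eq_prod_range]
  push_cast
  rfl

lemma rising_succ_div_factorial (k i : ℕ) :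
    rising (k + 1) i / i.factorial = (i + k).choose k := by
  rw [rising_eq_ascFactorial, Nat.ascFactorial_eq_factorial_mul_choose, add_comm k,
    Nat.choose_symm_add]
  push_cast
  field_simp

noncomputable def nbWeight (m : ℕ) (u : ℝ) (i : ℕ) : ℝ := rising m i / i.factorial * u ^ i

noncomputable def poissonWeight (r : ℝ) (j : ℕ) : ℝ := Real.exp (-r) * (r ^ j / j.factorial)

section Weights

variable {u : ℝ}

lemma nbWeight_succ (m : ℕ) (u : ℝ) (i : ℕ) :
    ((i : ℝ) + 1) * nbWeight m u (i + 1) = m * u * nbWeight (m + 1) u i := by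
  rw [nbWeight, nbWeight, rising_succ_eq_mul_rising, Nat.factorial_succ, pow_succ]
  push_cast
  field_simp

lemma hasSum_nbWeight (m : ℕ) (hu : |u| < 1) : HasSum (nbWeight m u) ((1 - u)⁻¹ ^ m) := by
  cases m with
  | zero =>
    convert hasSum_ite_eq 0 (1 : ℝ) using 1
    · ext i
      cases i with
      | zero => simp [nbWeight, rising]
      | succ i => simp [nbWeight, rising_succ_eq_mul_rising]
    · simp
  | succ k =>
    have h := hasSum_choose_mul_geometric_of_norm_lt_one k (r := u) hu
    rw [one_div, ← inv_pow] at h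
    have e : nbWeight (k + 1) u = fun i => ((i + k).choose k : ℝ) * u ^ i :=
      funext fun i => by rw [nbWeight, rising_succ_div_factorial]
    rwa [e]

lemma hasSum_nat_mul_nbWeight (m : ℕ) (hu : |u| < 1) :
    HasSum (fun i : ℕ => (i : ℝ) * nbWeight m u i) (m * u * (1 - u)⁻¹ ^ (m + 1)) :=
  hasSum_nat_mul_of_succ (hasSum_nbWeight (m + 1) hu) (nbWeight_succ m u)

lemma hasSum_nat_sq_mul_nbWeight (m : ℕ) (hu : |u| < 1) :
    HasSum (fun i : ℕ => (i : ℝ) ^ 2 * nbWeight m u i)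
      (m * u * ((m + 1 : ℕ) * u * (1 - u)⁻¹ ^ (m + 2) + (1 - u)⁻¹ ^ (m + 1))) :=
  hasSum_nat_sq_mul_of_succ (hasSum_nbWeight (m + 1) hu) (hasSum_nat_mul_nbWeight (m + 1) hu)
    (nbWeight_succ m u)

lemma poissonWeight_succ (r : ℝ) (j : ℕ) :
    ((j : ℝ) + 1) * poissonWeight r (j + 1) = r * poissonWeight r j := by
  rw [poissonWeight, poissonWeight, Nat.factorial_succ, pow_succ]
  push_cast
  field_simp

lemma hasSum_poissonWeight (r : ℝ) : HasSum (poissonWeight r) 1 := by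
  have h := (NormedSpace.expSeries_div_hasSum_exp r).mul_left (Real.exp (-r))
  rwa [← Real.exp_eq_exp_ℝ, ← Real.exp_add, neg_add_cancel, Real.exp_zero] at h

lemma hasSum_nat_mul_poissonWeight (r : ℝ) :
    HasSum (fun j : ℕ => (j : ℝ) * poissonWeight r j) (r * 1) :=
  hasSum_nat_mul_of_succ (hasSum_poissonWeight r) (poissonWeight_succ r)

lemma hasSum_nat_sq_mul_poissonWeight (r : ℝ) :
    HasSum (fun j : ℕ => (j : ℝ) ^ 2 * poissonWeight r j) (r * (r * 1 + 1)) :=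
  hasSum_nat_sq_mul_of_succ (hasSum_poissonWeight r) (hasSum_nat_mul_poissonWeight r)
    (poissonWeight_succ r)

end Weights

lemma pk_div_factorial (n : ℕ) (a : ℝ) (k : ℕ) :
    pk n a k / k.factorial
      = ∑ i ∈ range (k + 1), rising n i / i.factorial * (a ^ (k - i) / (k - i).factorial) := by
  rw [pk, sum_div]
  refine sum_congr rfl fun i hi => ?_
  rw [Nat.cast_choose ℝ (mem_range_succ_iff.mp hi)]
  have := (k - i).factorial_pos
  field_simp

lemma W_eq_sum_nbWeight_mul_poissonWeight (n : ℕ) (a : ℝ) {x : ℝ} (hx : 1 + x ≠ 0) (k : ℕ) :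
    W n a x k = ((1 + x) ^ n)⁻¹ * ∑ i ∈ range (k + 1),
      nbWeight n (x / (1 + x)) i * poissonWeight (a * (x / (1 + x))) (k - i) := by
  rw [W, pk_div_factorial, mul_sum, sum_mul, sum_div, mul_sum]
  refine sum_congr rfl fun i hi => ?_
  have hik := mem_range_succ_iff.mp hi
  rw [show x ^ k = x ^ i * x ^ (k - i) by rw [← pow_add, Nat.add_sub_cancel' hik],
    show (1 + x) ^ (k + n) = (1 + x) ^ i * (1 + x) ^ (k - i) * (1 + x) ^ n by
      rw [← pow_add, ← pow_add]; congr 1; omega,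
    nbWeight, poissonWeight, mul_div_assoc' a, neg_div, div_pow, div_pow, mul_pow]
  field_simp

lemma W_nonneg (n : ℕ) {a x : ℝ} (ha : 0 ≤ a) (hx : 0 ≤ x) (k : ℕ) : 0 ≤ W n a x k := by
  unfold W pk rising
  positivity

lemma abs_div_one_add_lt_one {x : ℝ} (hx : 0 ≤ x) : |x / (1 + x)| < 1 := by
  rw [abs_of_nonneg (by positivity), div_lt_one (by positivity)]
  linarith

lemma inv_one_sub_div_one_add {x : ℝ} (hx : 1 + x ≠ 0) : (1 - x / (1 + x))⁻¹ = 1 + x := by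
  rw [one_sub_div hx, add_sub_cancel_right, one_div, inv_inv]

lemma hasSum_W (n : ℕ) (a : ℝ) {x : ℝ} (hx : 0 ≤ x) : HasSum (W n a x) 1 := by
  have hx' : 1 + x ≠ 0 := by positivity
  have h := (hasSum_sum_range_mul (hasSum_nbWeight n (abs_div_one_add_lt_one hx))
    (hasSum_poissonWeight (a * (x / (1 + x))))).mul_left ((1 + x) ^ n)⁻¹
  rw [inv_one_sub_div_one_add hx', mul_one, inv_mul_cancel₀ (pow_ne_zero n hx')] at h
  rwa [funext (W_eq_sum_nbWeight_mul_poissonWeight n a hx')]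

lemma hasSum_W_mul_add_sq (n : ℕ) (a : ℝ) {x : ℝ} (hx : 0 ≤ x) (c : ℝ) :
    HasSum (fun k : ℕ => W n a x k * ((k : ℝ) + c) ^ 2)
      (n * x * (1 + x) + a * (x / (1 + x)) + (n * x + a * (x / (1 + x)) + c) ^ 2) := by
  have hx' : 1 + x ≠ 0 := by positivity
  have hu := abs_div_one_add_lt_one hx
  have h := (hasSum_sum_range_mul_mul_add_sq (hasSum_nbWeight n hu)
    (hasSum_nat_mul_nbWeight n hu) (hasSum_nat_sq_mul_nbWeight n hu)
    (hasSum_poissonWeight _) (hasSum_nat_mul_poissonWeight _)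
    (hasSum_nat_sq_mul_poissonWeight (a * (x / (1 + x)))) c).mul_left ((1 + x) ^ n)⁻¹
  rw [inv_one_sub_div_one_add hx'] at h
  simp only [← mul_assoc, ← W_eq_sum_nbWeight_mul_poissonWeight n a hx'] at h
  refine h.summable.hasSum_iff.mpr ?_
  rw [h.tsum_eq]
  push_cast
  field_simp
  ring

noncomputable def stancuGamma (n : ℕ) (a α β x : ℝ) : ℝ :=
  ((n + β ^ 2) / (n + β)) * x ^ 2 + ((n - 2 * α * β) / (n + β)) * x
    + (a ^ 2 / (n + β)) * (x ^ 2 / (1 + x) ^ 2)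
    - (2 * a * β / (n + β)) * (x ^ 2 / (1 + x))
    + (a * (1 + 2 * α) / (n + β)) * (x / (1 + x))
    + α ^ 2 / (n + β)

lemma hasSum_W_mul_sub_sq (n : ℕ) (a : ℝ) {α β x : ℝ} (hx : 0 ≤ x) (hnβ : (n : ℝ) + β ≠ 0) :
    HasSum (fun k : ℕ => W n a x k * (((k : ℝ) + α) / (n + β) - x) ^ 2)
      (stancuGamma n a α β x / (n + β)) := by
  have hx' : 1 + x ≠ 0 := by positivity
  have h := (hasSum_W_mul_add_sq n a hx (α - (n + β) * x)).div_const (((n : ℝ) + β) ^ 2)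
  have hγ : stancuGamma n a α β x / (n + β) = (n * x * (1 + x) + a * (x / (1 + x))
      + (n * x + a * (x / (1 + x)) + (α - (n + β) * x)) ^ 2) / (n + β) ^ 2 := by
    unfold stancuGamma
    field_simp
    ring
  rw [hγ]
  refine h.congr_fun fun k => ?_
  field_simp
  ring

theorem stancu_rate_of_convergence (a x α β : ℝ) (ha : 0 ≤ a) (hx : 0 ≤ x)
    (hα : 0 ≤ α) (hαβ : α ≤ β) (n : ℕ) (hn : 1 ≤ n)
    (f : ℝ → ℝ) (hf : UniformContinuousOn f (Set.Ici 0)) :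
    |L n a α β f x - f x| ≤
      (1 + Real.sqrt (((n + β ^ 2) / (n + β)) * x ^ 2 + ((n - 2 * α * β) / (n + β)) * x
        + (a ^ 2 / (n + β)) * (x ^ 2 / (1 + x) ^ 2)
        - (2 * a * β / (n + β)) * (x ^ 2 / (1 + x))
        + (a * (1 + 2 * α) / (n + β)) * (x / (1 + x))
        + α ^ 2 / (n + β))) * omega f (1 / Real.sqrt (n + β)) := by
  have hnβ : 0 < (n : ℝ) + β := by
    have : (1 : ℝ) ≤ n := by exact_mod_cast hn
    linarith
  have hnodes (k : ℕ) : 0 ≤ ((k : ℝ) + α) / (n + β) := by positivity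
  have h := abs_tsum_mul_sub_le_omega hf (one_div_pos.2 (Real.sqrt_pos.2 hnβ)) hx hnodes
    (W_nonneg n ha hx) (hasSum_W n a hx) (hasSum_W_mul_sub_sq n a hx hnβ.ne')
  have hscale : (1 / √((n : ℝ) + β))⁻¹ * √(stancuGamma n a α β x / (n + β))
      = √(stancuGamma n a α β x) := by
    rw [one_div, inv_inv, ← Real.sqrt_mul hnβ.le, mul_div_cancel₀ _ hnβ.ne']
  rwa [hscale] at h
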